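/- Let ζ ∈ ℂ satisfy ζ⁴ = −1 (a primitive 8th root of unity), and let Q₀, Q₁, Q₂, Q₃ be the four bilinear forms in variables x₀,…,x₃ and y₀,…,y₃ given by: Q₀ = ζ³x₀y₂ + ζx₃y₀ + x₁y₀ − x₂y₂; Q₁ = ζ³x₃y₁ − ζ³x₀y₃ + ζ²x₂y₃ + x₁y₁; Q₂ = −(ζ² − ζ − 1)x₂y₀ − (ζ² + 2ζ − 1)x₀y₁ − (ζ² − 2)x₁y₁ + (ζ² − ζ − 1)x₂y₁ + (ζ² − 1)x₀y₂ − (ζ³ + ζ − 1)x₁y₂ − (ζ³ + ζ + 2)x₃y₂ − (ζ³ + ζ)x₀y₃ − (ζ³ + ζ − 1)x₁y₃ + (ζ² − ζ + 1)x₂y₃ + ζx₂y₂ + x₁y₀; Q₃ = 6ζ³x₃y₃ − (4ζ³ + 3ζ² − 2ζ + 1)x₁y₀ − 3(ζ³ + ζ)x₂y₀ + (2ζ³ + ζ² + 1)x₁y₁ − 3(ζ³ + ζ)x₂y₁ + 2(ζ² + ζ − 1)x₀y₂ + 3(ζ² + 1)x₁y₂ + (3ζ³ + 2ζ² − ζ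 − 2)x₂y₂ − 2(ζ³ + ζ + 1)x₀y₃ − 3(ζ² + 1)x₁y₃ + (ζ³ + ζ − 2)x₂y₃ + 6x₀y₀. Then for every nonzero vector x = (x₀,x₁,x₂,x₃) ∈ ℂ⁴ with x₀⁴ + x₁⁴ + x₂⁴ + x₃⁴ = 0 (i.e., every point of the Fermat quartic surface), the ℂ-subspace {y ∈ ℂ⁴ : Q₀(x,y) = Q₁(x,y) = Q₂(x,y) = Q₃(x,y) = 0} has dimension exactly 1; that is, there is exactly one point y ∈ ℙ³(ℂ) with Q_j(x,y) = 0 for all j = 0,1,2,3. -/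

import Mathlib

/-- The four bilinear forms `Q₀, Q₁, Q₂, Q₃` of bi-degree (1,1) cutting out the graph of the
isomorphism `X₄₈ ≅ X₅₆`, depending on a primitive 8th root of unity `ζ`. -/
noncomputable def OguisoQ (ζ : ℂ) : Fin 4 → (Fin 4 → ℂ) → (Fin 4 → ℂ) → ℂ :=
  ![fun x y => ζ ^ 3 * x 0 * y 2 + ζ * x 3 * y 0 + x 1 * y 0 - x 2 * y 2,
    fun x y => ζ ^ 3 * x 3 * y 1 - ζ ^ 3 * x 0 * y 3 + ζ ^ 2 * x 2 * y 3 + x 1 * y 1,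
    fun x y =>
      -(ζ ^ 2 - ζ - 1) * x 2 * y 0 - (ζ ^ 2 + 2 * ζ - 1) * x 0 * y 1
        - (ζ ^ 2 - 2) * x 1 * y 1 + (ζ ^ 2 - ζ - 1) * x 2 * y 1
        + (ζ ^ 2 - 1) * x 0 * y 2 - (ζ ^ 3 + ζ - 1) * x 1 * y 2
        - (ζ ^ 3 + ζ + 2) * x 3 * y 2 - (ζ ^ 3 + ζ) * x 0 * y 3
        - (ζ ^ 3 + ζ - 1) * x 1 * y 3 + (ζ ^ 2 - ζ + 1) * x 2 * y 3
        + ζ * x 2 * y 2 + x 1 * y 0,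
    fun x y =>
      6 * ζ ^ 3 * x 3 * y 3 - (4 * ζ ^ 3 + 3 * ζ ^ 2 - 2 * ζ + 1) * x 1 * y 0
        - 3 * (ζ ^ 3 + ζ) * x 2 * y 0 + (2 * ζ ^ 3 + ζ ^ 2 + 1) * x 1 * y 1
        - 3 * (ζ ^ 3 + ζ) * x 2 * y 1 + 2 * (ζ ^ 2 + ζ - 1) * x 0 * y 2
        + 3 * (ζ ^ 2 + 1) * x 1 * y 2 + (3 * ζ ^ 3 + 2 * ζ ^ 2 - ζ - 2) * x 2 * y 2
        - 2 * (ζ ^ 3 + ζ + 1) * x 0 * y 3 - 3 * (ζ ^ 2 + 1) * x 1 * y 3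
        + (ζ ^ 3 + ζ - 2) * x 2 * y 3 + 6 * x 0 * y 0]

/-!
Writing `Q_j(x, y) = (A(x) y)_j` with `A(x)` the 4 × 4 matrix of linear forms in `x`, one finds
`det A(x) = (12ζ³ - 6ζ² - 6)(x₀⁴ + x₁⁴ + x₂⁴ + x₃⁴)`, so `A(x)` is singular on the Fermat quartic.
On the other hand each `x_k³` is a `ℚ(ζ)`-linear combination of the 3 × 3 minors of `A(x)`, so for
`x ≠ 0` some minor is nonzero. A singular 4 × 4 matrix with a nonzero 3 × 3 minor has a
one-dimensional kernel, and that kernel is the common zero locus of the `Q_j(x, ·)`.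
-/

open Module in
theorem Matrix.finrank_ker_mulVecLin_eq_one {K : Type*} [Field K] {n : ℕ}
    {A : Matrix (Fin (n + 1)) (Fin (n + 1)) K} (hdet : A.det = 0) {r c : Fin n → Fin (n + 1)}
    (hminor : (A.submatrix r c).det ≠ 0) :
    finrank K (LinearMap.ker A.mulVecLin) = 1 := by
  have rank_nullity := LinearMap.finrank_range_add_finrank_ker A.mulVecLin
  rw [finrank_fin_fun] at rank_nullity
  have rank_ge : n ≤ A.rank := by
    simpa [Matrix.rank_of_det_ne_zero hminor] using A.rank_submatrix_le r c
  have nullity_ne_zero : finrank K (LinearMap.ker A.mulVecLin) ≠ 0 := by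
    obtain ⟨v, hv, hAv⟩ := Matrix.exists_mulVec_eq_zero_iff.mpr hdet
    exact Submodule.finrank_eq_zero.not.mpr ((Submodule.ne_bot_iff _).mpr ⟨v, hAv, hv⟩)
  unfold Matrix.rank at rank_ge
  omega

noncomputable def oguisoMatrix (ζ : ℂ) (x : Fin 4 → ℂ) : Matrix (Fin 4) (Fin 4) ℂ :=
  Matrix.of fun j l => OguisoQ ζ j x (Pi.single l 1)

noncomputable def oguisoMinor (ζ : ℂ) (x : Fin 4 → ℂ) (i j : Fin 4) : ℂ :=
  ((oguisoMatrix ζ x).submatrix i.succAbove j.succAbove).det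

open Matrix in
lemma oguisoMatrix_mulVec (ζ : ℂ) (x y : Fin 4 → ℂ) (j : Fin 4) :
    (oguisoMatrix ζ x *ᵥ y) j = OguisoQ ζ j x y := by
  fin_cases j <;>
  · simp [oguisoMatrix, OguisoQ, mulVec, dotProduct, Fin.sum_univ_four]
    ring

lemma mem_ker_oguisoMatrix_iff (ζ : ℂ) (x y : Fin 4 → ℂ) :
    y ∈ LinearMap.ker (oguisoMatrix ζ x).mulVecLin ↔ ∀ j, OguisoQ ζ j x y = 0 := by
  simp [funext_iff, oguisoMatrix_mulVec]

set_option maxRecDepth 3000 in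
lemma det_oguisoMatrix {ζ : ℂ} (hζ : ζ ^ 4 = -1) (x : Fin 4 → ℂ) :
    (oguisoMatrix ζ x).det =
      (12 * ζ ^ 3 - 6 * ζ ^ 2 - 6) * (x 0 ^ 4 + x 1 ^ 4 + x 2 ^ 4 + x 3 ^ 4) := by
  simp [Matrix.det_succ_row_zero, Fin.sum_univ_succ, oguisoMatrix, OguisoQ, Fin.succAbove]
  grind

/- The coefficients solve a linear system over `ℚ(ζ)` in the 20-dimensional space of cubic
forms in `x`. -/
lemma cubes_eq_oguisoMinor_combinations {ζ : ℂ} (hζ : ζ ^ 4 = -1) (x : Fin 4 → ℂ) :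
    144 * x 0 ^ 3 =
        (2 - ζ - ζ ^ 3) * oguisoMinor ζ x 0 2
      + (-2 + ζ + ζ ^ 3) * oguisoMinor ζ x 1 3
      - 6 * ζ ^ 2 * oguisoMinor ζ x 2 1
      + (2 * ζ - 2 * ζ ^ 2 - 2 * ζ ^ 3) * oguisoMinor ζ x 2 2
      + (2 - 2 * ζ - 2 * ζ ^ 2) * oguisoMinor ζ x 2 3
      + (6 + 12 * ζ - 6 * ζ ^ 2) * oguisoMinor ζ x 3 0
      + (-2 * ζ + 8 * ζ ^ 2 + 2 * ζ ^ 3) * oguisoMinor ζ x 3 2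
      + (-2 + 8 * ζ + 2 * ζ ^ 2) * oguisoMinor ζ x 3 3 ∧
    144 * x 1 ^ 3 =
        (-1 - 2 * ζ + ζ ^ 2) * oguisoMinor ζ x 0 0
      + (-1 - 2 * ζ + ζ ^ 2) * oguisoMinor ζ x 1 1
      + (-1 - 2 * ζ + ζ ^ 2) * oguisoMinor ζ x 2 0
      + (1 + 4 * ζ - 3 * ζ ^ 2 - 2 * ζ ^ 3) * oguisoMinor ζ x 2 1
      + (-3 + 3 * ζ ^ 2) * oguisoMinor ζ x 2 2
      + (3 - 3 * ζ ^ 2) * oguisoMinor ζ x 2 3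
      + (4 - 4 * ζ + 2 * ζ ^ 2 - 12 * ζ ^ 3) * oguisoMinor ζ x 3 0
      + (2 - 4 * ζ - 4 * ζ ^ 3) * oguisoMinor ζ x 3 1
      + (6 + 6 * ζ + 6 * ζ ^ 3) * oguisoMinor ζ x 3 2
      + (6 + 6 * ζ + 6 * ζ ^ 3) * oguisoMinor ζ x 3 3 ∧
    144 * x 2 ^ 3 =
        (1 + 2 * ζ - ζ ^ 2) * oguisoMinor ζ x 0 2
      + (-1 - ζ ^ 2 - 2 * ζ ^ 3) * oguisoMinor ζ x 1 3
      + (-3 * ζ + 3 * ζ ^ 3) * oguisoMinor ζ x 2 0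
      + (-3 * ζ + 3 * ζ ^ 3) * oguisoMinor ζ x 2 1
      + (-ζ - 2 * ζ ^ 2 + ζ ^ 3) * oguisoMinor ζ x 2 2
      + (2 + ζ - 2 * ζ ^ 2 + 3 * ζ ^ 3) * oguisoMinor ζ x 2 3
      + (6 - 6 * ζ - 6 * ζ ^ 2) * oguisoMinor ζ x 3 0
      + (-6 + 6 * ζ + 6 * ζ ^ 2) * oguisoMinor ζ x 3 1
      + (-6 - 2 * ζ + 2 * ζ ^ 2 + 8 * ζ ^ 3) * oguisoMinor ζ x 3 2
      + (4 + 2 * ζ - 4 * ζ ^ 2) * oguisoMinor ζ x 3 3 ∧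
    144 * x 3 ^ 3 =
        (-ζ - 2 * ζ ^ 2 + ζ ^ 3) * oguisoMinor ζ x 0 0
      + (2 - ζ - ζ ^ 3) * oguisoMinor ζ x 1 1
      + 6 * ζ * oguisoMinor ζ x 2 2
      + (12 - 6 * ζ - 6 * ζ ^ 3) * oguisoMinor ζ x 3 3 := by
  refine ⟨?_, ?_, ?_, ?_⟩ <;>
  · simp [oguisoMinor, Matrix.det_fin_three, oguisoMatrix, OguisoQ, Fin.succAbove]
    grind

lemma eq_zero_of_oguisoMinor_eq_zero {ζ : ℂ} (hζ : ζ ^ 4 = -1) {x : Fin 4 → ℂ}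
    (h : ∀ i j, oguisoMinor ζ x i j = 0) : x = 0 := by
  obtain ⟨h0, h1, h2, h3⟩ := cubes_eq_oguisoMinor_combinations hζ x
  simp only [h, mul_zero, add_zero, sub_zero] at h0 h1 h2 h3
  funext k
  fin_cases k <;> simp_all

/-- for every point `x` of the Fermat quartic, the common zero locus in `y` of
the four bilinear forms `Q₀, …, Q₃` is a 1-dimensional subspace of ℂ⁴, i.e., a single point of
ℙ³(ℂ). -/
theorem Oguiso_graph_projects_bijectively (ζ : ℂ) (hζ : ζ ^ 4 = -1)
    (x : Fin 4 → ℂ) (hx : x ≠ 0)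
    (hxF : x 0 ^ 4 + x 1 ^ 4 + x 2 ^ 4 + x 3 ^ 4 = 0) :
    ∃ W : Submodule ℂ (Fin 4 → ℂ), Module.finrank ℂ ↥W = 1 ∧
      ∀ y : Fin 4 → ℂ, (y ∈ W ↔ ∀ j : Fin 4, OguisoQ ζ j x y = 0) := by
  obtain ⟨i, j, hminor⟩ : ∃ i j, oguisoMinor ζ x i j ≠ 0 := by
    by_contra! h
    exact hx (eq_zero_of_oguisoMinor_eq_zero hζ h)
  refine ⟨LinearMap.ker (oguisoMatrix ζ x).mulVecLin,
    Matrix.finrank_ker_mulVecLin_eq_one ?_ hminor, mem_ker_oguisoMatrix_iff ζ x⟩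
  rw [det_oguisoMatrix hζ, hxF, mul_zero]
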